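/- arXiv:1207.6765 — 3 statements merged into one kernel-verified Lean document; each statement's English description precedes it below -/
import Mathlib

section
/- Let Γ be a signed graph of order n with no isolated vertex and with rank(A(Γ)) ≤ 3. Fix any vertex x of Γ, let Y = N(x) be the neighborhood of x and X = V(Γ) \ Y. Then every vertex of X is adjacent to every vertex of Y. -/
/- The adjacency matrix of a signed graph `(G, σ)`: the `(u,v)` entry is `σ u v`
if `uv` is an edge of `G`, and `0` otherwise. -/
open Classical in
noncomputable def signedAdj {V : Type*} (G : SimpleGraph V) (σ : V → V → ℝ) :
    Matrix V V ℝ :=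
  Matrix.of fun u v => if G.Adj u v then σ u v else 0

/-- The sign of a walk: the product of the signs of its edges. -/
def walkSign {V : Type*} {G : SimpleGraph V} (σ : V → V → ℝ) {u v : V}
    (p : G.Walk u v) : ℝ :=
  (p.darts.map fun d => σ d.toProd.1 d.toProd.2).prod

/-- A signed graph is balanced if every cycle is positive. -/
def IsBalanced {V : Type*} (G : SimpleGraph V) (σ : V → V → ℝ) : Prop :=
  ∀ (u : V) (c : G.Walk u u), c.IsCycle → walkSign σ c = 1

/-!
If `u ∉ N(x)` and `v ∈ N(x)` were non-adjacent, pick a neighbour `w` of `u`. On `x, u, v, w`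
the vertex `u` is pendant at `w`, so `{xv, uw}` is the only perfect matching of the induced
signed graph and the principal `4 × 4` minor of `A(Γ)` is `σ(xv)σ(vx)σ(uw)σ(wu) ≠ 0`.
Hence `rank A(Γ) ≥ 4`.
-/

theorem Matrix.card_le_rank_of_det_submatrix_ne_zero {m n ι K : Type*} [Field K] [Fintype n]
    [Fintype ι] [DecidableEq ι] (A : Matrix m n K) (r : ι → m) (c : ι → n)
    (h : (A.submatrix r c).det ≠ 0) : Fintype.card ι ≤ A.rank :=
  (rank_of_isUnit _ ((isUnit_iff_isUnit_det _).2 h.isUnit)).ge.trans (A.rank_submatrix_le r c)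

theorem Matrix.det_fin_four_of_matching_pattern {R : Type*} [CommRing R]
    (s s' a a' b b' c c' : R) :
    !![0, 0, s, a; 0, 0, 0, b; s', 0, 0, c; a', b', c', 0].det = b * b' * s * s' := by
  rw [det_succ_row_zero, Fin.sum_univ_four]
  simp [det_fin_three, Fin.succAbove, mul_comm, mul_left_comm]

section signedAdj

variable {V : Type*} {G : SimpleGraph V} {σ : V → V → ℝ} {u v : V}

theorem signedAdj_apply_of_not_adj (h : ¬G.Adj u v) : signedAdj G σ u v = 0 := by
  simp [signedAdj, h]

theorem signedAdj_apply_ne_zero (h : G.Adj u v) (hσ : σ u v ≠ 0) : signedAdj G σ u v ≠ 0 := by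
  simp [signedAdj, h, hσ]

theorem four_le_rank_signedAdj [Fintype V] (hσ : ∀ u v, G.Adj u v → σ u v ≠ 0)
    {x w : V} (hxv : G.Adj x v) (hxu : ¬G.Adj x u) (huv : ¬G.Adj u v) (huw : G.Adj u w) :
    4 ≤ (signedAdj G σ).rank := by
  set A := signedAdj G σ
  have hsub : A.submatrix ![x, u, v, w] ![x, u, v, w] =
      !![0, 0, A x v, A x w; 0, 0, 0, A u w; A v x, 0, 0, A v w; A w x, A w u, A w v, 0] := by
    have hux : ¬G.Adj u x := fun h => hxu h.symm
    have hvu : ¬G.Adj v u := fun h => huv h.symm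
    ext i j
    fin_cases i <;> fin_cases j <;>
      simp [A, signedAdj_apply_of_not_adj, hxu, hux, huv, hvu]
  have hdet : (A.submatrix ![x, u, v, w] ![x, u, v, w]).det ≠ 0 := by
    rw [hsub, Matrix.det_fin_four_of_matching_pattern]
    simp [A, signedAdj_apply_ne_zero, hσ, huw, huw.symm, hxv, hxv.symm]
  simpa using A.card_le_rank_of_det_submatrix_ne_zero _ _ hdet

end signedAdj

theorem adj_between_complement_and_neighborhood_of_rank_le_three_general
    {V : Type*} [Fintype V] (G : SimpleGraph V) (σ : V → V → ℝ)
    (hsgn : ∀ u v, G.Adj u v → σ u v = 1 ∨ σ u v = -1)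
    (hrank : (signedAdj G σ).rank ≤ 3)
    (hnoiso : ∀ w : V, ∃ z : V, G.Adj w z)
    (x u v : V) (hu : u ∉ G.neighborSet x) (hv : v ∈ G.neighborSet x) :
    G.Adj u v := by
  by_contra huv
  obtain ⟨w, huw⟩ := hnoiso u
  have hσ : ∀ p q, G.Adj p q → σ p q ≠ 0 := fun p q h => by
    rcases hsgn p q h with h | h <;> simp [h]
  have := four_le_rank_signedAdj hσ hv hu huv huw
  omega

/-- If a signed graph `Γ` has no isolated vertex and `rank A(Γ) ≤ 3`, then for
any vertex `x`, with `Y = N(x)` and `X = V \ Y`, every vertex of `X` is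
adjacent to every vertex of `Y`. -/
theorem adj_between_complement_and_neighborhood_of_rank_le_three
    {V : Type*} [Fintype V] (G : SimpleGraph V) (σ : V → V → ℝ)
    (hsym : ∀ u v, σ u v = σ v u)
    (hsgn : ∀ u v, G.Adj u v → σ u v = 1 ∨ σ u v = -1)
    (hrank : (signedAdj G σ).rank ≤ 3)
    (hnoiso : ∀ w : V, ∃ z : V, G.Adj w z)
    (x u v : V) (hu : u ∉ G.neighborSet x) (hv : v ∈ G.neighborSet x) :
    G.Adj u v :=
  adj_between_complement_and_neighborhood_of_rank_le_three_general G σ hsgn hrank hnoiso x u v hu hv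
end

section
/- Let Γ be a signed graph containing a special path P v₁v₂v₃ with σ(v₁v₂) = −1 and σ(v₂v₃) = +1. Suppose v₁ has a neighbor v other than v₂, and let Γ′ be the signed graph obtained from Γ by deleting the edge vv₁ and adding a new edge vv₃ carrying the same sign σ(vv₁). Then η(Γ′) = η(Γ). -/
/-!
Row `v₂` of `A(Γ)` is `e_{v₃} - e_{v₁}`. Adding `σ(vv₁)` times row `v₂` to row `v`, and the same
multiple of column `v₂` to column `v`, cancels the entry at `vv₁` and puts `σ(vv₁)` at `vv₃`,
which was `0` because `v₁` and `v₃` have no common neighbour besides `v₂`; the entry at `vv`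
is untouched since `A(Γ)_{v₂v₂} = 0`. Hence `A(Γ') = T A(Γ) Tᵀ` for a transvection `T`, and
congruence by an invertible matrix preserves rank.
-/

namespace Matrix

variable {n R : Type*} [Fintype n] [DecidableEq n] [CommRing R]

theorem transvection_mul_mul_transvection_apply (i j : n) (c : R) (A : Matrix n n R) (a b : n) :
    (transvection i j c * A * transvection j i c) a b =
      A a b + (if a = i then c * A j b else 0) + (if b = i then c * A a j else 0) +
        (if a = i ∧ b = i then c * c * A j j else 0) := by
  by_cases ha : a = i <;> by_cases hb : b = i <;> simp [ha, hb]
  ring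

theorem rank_transvection_mul_mul_transvection {i j : n} (hij : i ≠ j) (c : R)
    (A : Matrix n n R) : (transvection i j c * A * transvection j i c).rank = A.rank := by
  rw [rank_mul_eq_left_of_isUnit_det _ _ (by simp [det_transvection_of_ne _ _ hij.symm]),
    rank_mul_eq_right_of_isUnit_det _ _ (by simp [det_transvection_of_ne _ _ hij])]

end Matrix

section SignedAdj

variable {V : Type*} {G : SimpleGraph V} {σ : V → V → ℝ}

open Classical in
theorem signedAdj_apply (a b : V) :
    signedAdj G σ a b = if G.Adj a b then σ a b else 0 := rfl

theorem signedAdj_apply_comm (hsym : ∀ u v, σ u v = σ v u) (a b : V) :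
    signedAdj G σ a b = signedAdj G σ b a := by
  rw [signedAdj_apply, signedAdj_apply, G.adj_comm, hsym]

open Classical in
theorem signedAdj_apply_of_neighborSet_eq_pair {k p q : V} (hk : G.neighborSet k = {p, q})
    (j : V) : signedAdj G σ k j = if j = p then σ k p else if j = q then σ k q else 0 := by
  have hadj : G.Adj k j ↔ j = p ∨ j = q := by
    rw [← G.mem_neighborSet, hk, Set.mem_insert_iff, Set.mem_singleton_iff]
  by_cases hp : j = p
  · subst hp; simp [signedAdj_apply, hadj]
  by_cases hq : j = q
  · subst hq; simp [signedAdj_apply, hadj, hp]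
  · simp [signedAdj_apply, hadj, hp, hq]

open Classical in
theorem signedAdj_relocate_apply {v v₁ v₃ : V} (hvv₃ : v ≠ v₃) (c : ℝ) (a b : V) :
    signedAdj (G.deleteEdges {s(v, v₁)} ⊔ SimpleGraph.fromEdgeSet {s(v, v₃)})
        (fun a b => if (a = v ∧ b = v₃) ∨ (a = v₃ ∧ b = v) then c else σ a b) a b =
      if s(a, b) = s(v, v₃) then c else if s(a, b) = s(v, v₁) then 0 else signedAdj G σ a b := by
  by_cases h₃ : s(a, b) = s(v, v₃)
  · obtain ⟨rfl, rfl⟩ | ⟨rfl, rfl⟩ := Sym2.eq_iff.1 h₃ <;>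
      simp [signedAdj_apply, hvv₃, hvv₃.symm]
  have h₃' : ¬((a = v ∧ b = v₃) ∨ (a = v₃ ∧ b = v)) := by rwa [← Sym2.eq_iff]
  by_cases h₁ : s(a, b) = s(v, v₁)
  · obtain ⟨rfl, rfl⟩ | ⟨rfl, rfl⟩ := Sym2.eq_iff.1 h₁ <;> simp [signedAdj_apply, h₃]
  · simp [signedAdj_apply, h₁, h₃, h₃']

open Classical in
theorem signedAdj_relocate_eq_transvection_mul_mul_transvection [Fintype V]
    (hsym : ∀ u v, σ u v = σ v u) {v₁ v₂ v₃ v : V}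
    (hdeg : G.neighborSet v₂ = {v₁, v₃}) (h13ne : v₁ ≠ v₃) (hs12 : σ v₁ v₂ = -1)
    (hs23 : σ v₂ v₃ = 1) (hv : G.Adj v v₁) (hvv₃ : v ≠ v₃) (hv₃ : ¬ G.Adj v v₃) :
    signedAdj (G.deleteEdges {s(v, v₁)} ⊔ SimpleGraph.fromEdgeSet {s(v, v₃)})
        (fun a b => if (a = v ∧ b = v₃) ∨ (a = v₃ ∧ b = v) then σ v v₁ else σ a b) =
      Matrix.transvection v v₂ (σ v v₁) * signedAdj G σ * Matrix.transvection v₂ v (σ v v₁) := by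
  have hrow : ∀ j, signedAdj G σ v₂ j = if j = v₁ then -1 else if j = v₃ then 1 else 0 := by
    intro j
    rw [signedAdj_apply_of_neighborSet_eq_pair hdeg, hsym v₂ v₁, hs12, hs23]
  have hcol : ∀ j, signedAdj G σ j v₂ = if j = v₁ then -1 else if j = v₃ then 1 else 0 :=
    fun j => (signedAdj_apply_comm hsym j v₂).trans (hrow j)
  have hv₃' : ¬ G.Adj v₃ v := fun h => hv₃ h.symm
  have hdiag : signedAdj G σ v₂ v₂ = 0 := by simp [signedAdj_apply]
  ext a b
  rw [Matrix.transvection_mul_mul_transvection_apply, hdiag, hrow, hcol,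
    signedAdj_relocate_apply hvv₃]
  by_cases h₃ : s(a, b) = s(v, v₃)
  · obtain ⟨rfl, rfl⟩ | ⟨rfl, rfl⟩ := Sym2.eq_iff.1 h₃ <;>
      simp [signedAdj_apply, hvv₃, hv.ne, hv₃, hv₃', h13ne.symm]
  by_cases h₁ : s(a, b) = s(v, v₁)
  · obtain ⟨rfl, rfl⟩ | ⟨rfl, rfl⟩ := Sym2.eq_iff.1 h₁ <;>
      simp [signedAdj_apply, hvv₃, hv.ne, hv, hv.symm, hsym a b, h13ne]
  rw [if_neg h₃, if_neg h₁]
  by_cases ha : a = v <;> by_cases hb : b = v <;> simp_all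

end SignedAdj

open Classical in
theorem nullity_invariant_under_edge_relocation_along_special_path_general
    {V : Type*} [Fintype V] (G : SimpleGraph V) (σ : V → V → ℝ)
    (hsym : ∀ u v, σ u v = σ v u)
    (v₁ v₂ v₃ v : V)
    (h13ne : v₁ ≠ v₃)
    (hdeg : G.neighborSet v₂ = {v₁, v₃})
    (h13 : ¬ G.Adj v₁ v₃)
    (hcommon : ∀ w : V, w ≠ v₂ → ¬ (G.Adj v₁ w ∧ G.Adj v₃ w))
    (hs12 : σ v₁ v₂ = -1) (hs23 : σ v₂ v₃ = 1)
    (hv : G.Adj v v₁) (hvne : v ≠ v₂) :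
    Fintype.card V -
        (signedAdj ((G.deleteEdges {s(v, v₁)}) ⊔ SimpleGraph.fromEdgeSet {s(v, v₃)})
          (fun a b =>
            if (a = v ∧ b = v₃) ∨ (a = v₃ ∧ b = v) then σ v v₁ else σ a b)).rank =
      Fintype.card V - (signedAdj G σ).rank := by
  have hvv₃ : v ≠ v₃ := by rintro rfl; exact h13 hv.symm
  have hv₃ : ¬ G.Adj v v₃ := fun h => hcommon v hvne ⟨hv.symm, h.symm⟩
  rw [signedAdj_relocate_eq_transvection_mul_mul_transvection hsym hdeg h13ne hs12 hs23 hv hvv₃ hv₃,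
    Matrix.rank_transvection_mul_mul_transvection hvne]

open Classical in
theorem nullity_invariant_under_edge_relocation_along_special_path
    {V : Type*} [Fintype V] (G : SimpleGraph V) (σ : V → V → ℝ)
    (hsym : ∀ u v, σ u v = σ v u)
    (hsgn : ∀ u v, G.Adj u v → σ u v = 1 ∨ σ u v = -1)
    (v₁ v₂ v₃ v : V)
    (h12 : G.Adj v₁ v₂) (h23 : G.Adj v₂ v₃) (h13ne : v₁ ≠ v₃)
    (hdeg : G.neighborSet v₂ = {v₁, v₃})
    (h13 : ¬ G.Adj v₁ v₃)
    (hcommon : ∀ w : V, w ≠ v₂ → ¬ (G.Adj v₁ w ∧ G.Adj v₃ w))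
    (hs12 : σ v₁ v₂ = -1) (hs23 : σ v₂ v₃ = 1)
    (hv : G.Adj v v₁) (hvne : v ≠ v₂) :
    Fintype.card V -
        (signedAdj ((G.deleteEdges {s(v, v₁)}) ⊔ SimpleGraph.fromEdgeSet {s(v, v₃)})
          (fun a b =>
            if (a = v ∧ b = v₃) ∨ (a = v₃ ∧ b = v) then σ v v₁ else σ a b)).rank =
      Fintype.card V - (signedAdj G σ).rank :=
  nullity_invariant_under_edge_relocation_along_special_path_general G σ hsym v₁ v₂ v₃ v h13ne hdeg
    h13 hcommon hs12 hs23 hv hvne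
end

section
/- Let Γ be a signed graph whose underlying graph is a complete bipartite graph. If Γ is unbalanced, then Γ contains an unbalanced cycle of length 4; equivalently, if every 4-cycle of a complete bipartite signed graph is positive, then Γ is balanced. -/
/-!
Fix `a₀ ∈ X` and `b₀ ∈ Y` and switch by `θ x = σ x b₀` on `X`, `θ y = σ a₀ y σ a₀ b₀` on `Y`.
If every `4`-cycle is positive, the `4`-cycle `u v a₀ b₀` shows that `σ u v = θ u θ v` on every
edge, so the sign of any closed walk telescopes to `θ u ^ 2 = 1`.
-/

open SimpleGraph

section Switching

variable {V : Type*} {G : SimpleGraph V} {σ : V → V → ℝ}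

@[simp]
lemma walkSign_nil {u : V} : walkSign σ (Walk.nil : G.Walk u u) = 1 := by
  simp [walkSign]

@[simp]
lemma walkSign_cons {u v w : V} (h : G.Adj u v) (p : G.Walk v w) :
    walkSign σ (Walk.cons h p) = σ u v * walkSign σ p := by
  simp [walkSign]

lemma walkSign_eq_mul_of_switching (θ : V → ℝ) (hθ : ∀ w, θ w ^ 2 = 1)
    (hσ : ∀ u v, G.Adj u v → σ u v = θ u * θ v) {u v : V} (p : G.Walk u v) :
    walkSign σ p = θ u * θ v := by
  induction p with
  | nil => rw [walkSign_nil, ← sq, hθ]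
  | @cons a b c h p ih =>
    rw [walkSign_cons, ih, hσ a b h]
    linear_combination θ a * θ c * hθ b

lemma isBalanced_of_switching (θ : V → ℝ) (hθ : ∀ w, θ w ^ 2 = 1)
    (hσ : ∀ u v, G.Adj u v → σ u v = θ u * θ v) : IsBalanced G σ := fun u c _ => by
  rw [walkSign_eq_mul_of_switching θ hθ hσ c, ← sq, hθ]

end Switching

lemma eq_mul_mul_of_mul_eq_one_of_sq_eq_one {M : Type*} [CommMonoid M] {x y z w : M}
    (h : x * y * z * w = 1) (hy : y ^ 2 = 1) (hz : z ^ 2 = 1) (hw : w ^ 2 = 1) :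
    x = y * z * w :=
  calc x = x * (y ^ 2 * z ^ 2 * w ^ 2) := by rw [hy, hz, hw, one_mul, one_mul, mul_one]
    _ = (x * y * z * w) * (y * z * w) := by simp only [sq]; ac_rfl
    _ = y * z * w := by rw [h, one_mul]

lemma mul_mul_mul_eq_one_of_ne_neg_one {x y z w : ℝ} (hx : x = 1 ∨ x = -1)
    (hy : y = 1 ∨ y = -1) (hz : z = 1 ∨ z = -1) (hw : w = 1 ∨ w = -1)
    (h : x * y * z * w ≠ -1) : x * y * z * w = 1 := by
  rcases hx with rfl | rfl <;> rcases hy with rfl | rfl <;> rcases hz with rfl | rfl <;>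
    rcases hw with rfl | rfl <;> norm_num at *

section CompleteBipartite

variable {V : Type*} {G : SimpleGraph V} {σ : V → V → ℝ} {X Y : Set V}

lemma sign_sq_eq_one_of_mem (hsgn : ∀ u v, G.Adj u v → σ u v = 1 ∨ σ u v = -1)
    (hadj : ∀ u v : V, G.Adj u v ↔ (u ∈ X ∧ v ∈ Y) ∨ (u ∈ Y ∧ v ∈ X))
    {x y : V} (hx : x ∈ X) (hy : y ∈ Y) : σ x y ^ 2 = 1 := by
  rcases hsgn x y ((hadj x y).2 (.inl ⟨hx, hy⟩)) with h | h <;> simp [h]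

lemma sign_eq_of_fourCycles_pos (hsym : ∀ u v, σ u v = σ v u)
    (hsgn : ∀ u v, G.Adj u v → σ u v = 1 ∨ σ u v = -1)
    (hadj : ∀ u v : V, G.Adj u v ↔ (u ∈ X ∧ v ∈ Y) ∨ (u ∈ Y ∧ v ∈ X))
    (hpos : ∀ a b c d : V, G.Adj a b → G.Adj b c → G.Adj c d → G.Adj d a →
      a ≠ c → b ≠ d → σ a b * σ b c * σ c d * σ d a = 1)
    {a₀ b₀ u v : V} (ha₀ : a₀ ∈ X) (hb₀ : b₀ ∈ Y) (hu : u ∈ X) (hv : v ∈ Y) :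
    σ u v = σ u b₀ * (σ a₀ v * σ a₀ b₀) := by
  have adj {x y : V} (hx : x ∈ X) (hy : y ∈ Y) : G.Adj x y := (hadj x y).2 (.inl ⟨hx, hy⟩)
  have sq_one {x y : V} (hx : x ∈ X) (hy : y ∈ Y) : σ x y ^ 2 = 1 :=
    sign_sq_eq_one_of_mem hsgn hadj hx hy
  -- the closed walk `u v a₀ b₀` is positive also when it degenerates to a doubled edge
  have hcycle : σ u v * σ v a₀ * σ a₀ b₀ * σ b₀ u = 1 := by
    by_cases hua : u = a₀
    · subst hua
      rw [hsym v, hsym b₀]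
      linear_combination σ u b₀ ^ 2 * sq_one hu hv + sq_one hu hb₀
    by_cases hvb : v = b₀
    · subst hvb
      rw [hsym v a₀, hsym v u]
      linear_combination σ a₀ v ^ 2 * sq_one hu hv + sq_one ha₀ hv
    exact hpos u v a₀ b₀ (adj hu hv) (adj ha₀ hv).symm (adj ha₀ hb₀) (adj hu hb₀).symm hua hvb
  rw [eq_mul_mul_of_mul_eq_one_of_sq_eq_one hcycle (hsym v a₀ ▸ sq_one ha₀ hv)
    (sq_one ha₀ hb₀) (hsym b₀ u ▸ sq_one hu hb₀), hsym b₀ u, hsym v a₀]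
  ring

lemma exists_switching_of_fourCycles_pos (hsym : ∀ u v, σ u v = σ v u)
    (hsgn : ∀ u v, G.Adj u v → σ u v = 1 ∨ σ u v = -1)
    (hdis : Disjoint X Y) (hcover : X ∪ Y = Set.univ)
    (hadj : ∀ u v : V, G.Adj u v ↔ (u ∈ X ∧ v ∈ Y) ∨ (u ∈ Y ∧ v ∈ X))
    (hpos : ∀ a b c d : V, G.Adj a b → G.Adj b c → G.Adj c d → G.Adj d a →
      a ≠ c → b ≠ d → σ a b * σ b c * σ c d * σ d a = 1)
    {a₀ b₀ : V} (ha₀ : a₀ ∈ X) (hb₀ : b₀ ∈ Y) :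
    ∃ θ : V → ℝ, (∀ w, θ w ^ 2 = 1) ∧ ∀ u v, G.Adj u v → σ u v = θ u * θ v := by
  classical
  set θ : V → ℝ := fun w => if w ∈ X then σ w b₀ else σ a₀ w * σ a₀ b₀
  have sq_one {x y : V} (hx : x ∈ X) (hy : y ∈ Y) : σ x y ^ 2 = 1 :=
    sign_sq_eq_one_of_mem hsgn hadj hx hy
  have edge {u v : V} (hu : u ∈ X) (hv : v ∈ Y) : σ u v = θ u * θ v := by
    simp only [θ, if_pos hu, if_neg (Set.disjoint_right.1 hdis hv)]
    exact sign_eq_of_fourCycles_pos hsym hsgn hadj hpos ha₀ hb₀ hu hv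
  refine ⟨θ, fun w => ?_, fun u v huv => ?_⟩
  · rcases (Set.eq_univ_iff_forall.1 hcover w) with hw | hw
    · simp only [θ, if_pos hw, sq_one hw hb₀]
    · simp only [θ, if_neg (Set.disjoint_right.1 hdis hw), mul_pow, sq_one ha₀ hw,
        sq_one ha₀ hb₀, one_mul]
  · rcases (hadj u v).1 huv with ⟨hu, hv⟩ | ⟨hu, hv⟩
    · exact edge hu hv
    · rw [hsym, edge hv hu, mul_comm]

end CompleteBipartite

theorem unbalanced_complete_bipartite_has_unbalanced_four_cycle_general
    {V : Type*} (G : SimpleGraph V) (σ : V → V → ℝ)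
    (hsym : ∀ u v, σ u v = σ v u)
    (hsgn : ∀ u v, G.Adj u v → σ u v = 1 ∨ σ u v = -1)
    (X Y : Set V) (hdis : Disjoint X Y) (hcover : X ∪ Y = Set.univ)
    (hadj : ∀ u v : V, G.Adj u v ↔ (u ∈ X ∧ v ∈ Y) ∨ (u ∈ Y ∧ v ∈ X))
    (hunbal : ¬ IsBalanced G σ) :
    ∃ a b c d : V, G.Adj a b ∧ G.Adj b c ∧ G.Adj c d ∧ G.Adj d a ∧
      a ≠ c ∧ b ≠ d ∧ σ a b * σ b c * σ c d * σ d a = -1 := by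
  by_contra hneg
  push Not at hneg
  have hpos : ∀ a b c d : V, G.Adj a b → G.Adj b c → G.Adj c d → G.Adj d a →
      a ≠ c → b ≠ d → σ a b * σ b c * σ c d * σ d a = 1 :=
    fun a b c d hab hbc hcd hda hac hbd => mul_mul_mul_eq_one_of_ne_neg_one (hsgn a b hab)
      (hsgn b c hbc) (hsgn c d hcd) (hsgn d a hda) (hneg a b c d hab hbc hcd hda hac hbd)
  obtain ⟨u, c, hc, -⟩ : ∃ u, ∃ c : G.Walk u u, c.IsCycle ∧ walkSign σ c ≠ 1 := by
    simpa [IsBalanced] using hunbal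
  obtain ⟨a₀, b₀, ha₀, hb₀⟩ : ∃ a₀ b₀, a₀ ∈ X ∧ b₀ ∈ Y := by
    rcases (hadj _ _).1 (c.adj_snd hc.not_nil) with ⟨hu, hv⟩ | ⟨hu, hv⟩
    · exact ⟨_, _, hu, hv⟩
    · exact ⟨_, _, hv, hu⟩
  obtain ⟨θ, hθ, hσ⟩ :=
    exists_switching_of_fourCycles_pos hsym hsgn hdis hcover hadj hpos ha₀ hb₀
  exact hunbal (isBalanced_of_switching θ hθ hσ)

/-- An unbalanced signed graph whose underlying graph is complete bipartite
(with parts `X`, `Y` partitioning the vertex set) contains an unbalanced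
`4`-cycle. -/
theorem unbalanced_complete_bipartite_has_unbalanced_four_cycle
    {V : Type*} [Fintype V] (G : SimpleGraph V) (σ : V → V → ℝ)
    (hsym : ∀ u v, σ u v = σ v u)
    (hsgn : ∀ u v, G.Adj u v → σ u v = 1 ∨ σ u v = -1)
    (X Y : Set V) (hdis : Disjoint X Y) (hcover : X ∪ Y = Set.univ)
    (hadj : ∀ u v : V, G.Adj u v ↔ (u ∈ X ∧ v ∈ Y) ∨ (u ∈ Y ∧ v ∈ X))
    (hunbal : ¬ IsBalanced G σ) :
    ∃ a b c d : V, G.Adj a b ∧ G.Adj b c ∧ G.Adj c d ∧ G.Adj d a ∧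
      a ≠ c ∧ b ≠ d ∧ σ a b * σ b c * σ c d * σ d a = -1 :=
  unbalanced_complete_bipartite_has_unbalanced_four_cycle_general G σ hsym hsgn X Y hdis hcover hadj
    hunbal
end
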